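/- arXiv:1810.01724 — 4 statements merged into one kernel-verified Lean document; each statement's English description precedes it below -/
import Mathlib

section
/- Let X be a random variable taking values in a finite set S ⊂ ℝ with probability mass function p(x) = P(X = x) and cumulative distribution function F(x) = P(X ≤ x), and define the mid-distribution transform F^mid(x) = F(x) − p(x)/2. Then Var(F^mid(X)) = Σ_{x∈S} p(x) (F^mid(x) − 1/2)² = (1 − Σ_{x∈S} p(x)³)/12. -/
/-!
The interval `[0, 1]` is cut into consecutive pieces `[F x - p x, F x]` of lengths `p x`, whose
midpoints are `Fmid x`. For `q(t) = (t - 1/2)²` the midpoint rule on a piece of length `h`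
underestimates `∫ q` by exactly `h³ / 12`, so summing over the pieces gives
`∑ p x · q (Fmid x) = ∫₀¹ q - ∑ p x³ / 12 = (1 - ∑ p x³) / 12`.
-/

open Finset

/-- `∑_{y ∈ S, y ≤ x} p y - p x` is the partial sum at the predecessor of `x` in `S`, so the sum
telescopes. -/
theorem Finset.sum_sub_comp_partialSum_telescope {α G M : Type*} [LinearOrder α]
    [AddCommGroup G] [AddCommGroup M] (S : Finset α) (p : α → G) (g : G → M) :
    ∑ x ∈ S, (g (∑ y ∈ S.filter (· ≤ x), p y) - g (∑ y ∈ S.filter (· ≤ x), p y - p x))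
      = g (∑ x ∈ S, p x) - g 0 := by
  induction S using Finset.induction_on_max with
  | empty => simp
  | insert a s ha ih =>
    have ha_notMem : a ∉ s := fun h => lt_irrefl a (ha a h)
    have filter_le_a : (insert a s).filter (· ≤ a) = insert a s :=
      filter_true_of_mem fun x hx => (mem_insert.1 hx).elim le_of_eq fun h => (ha x h).le
    have filter_le_of_mem : ∀ x ∈ s, (insert a s).filter (· ≤ x) = s.filter (· ≤ x) :=
      fun x hx => by rw [filter_insert, if_neg (not_le.2 (ha x hx))]
    calc _ = g (p a + ∑ x ∈ s, p x) - g (∑ x ∈ s, p x)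
          + ∑ x ∈ s, (g (∑ y ∈ s.filter (· ≤ x), p y) - g (∑ y ∈ s.filter (· ≤ x), p y - p x)) := by
          rw [sum_insert ha_notMem, filter_le_a, sum_insert ha_notMem, add_sub_cancel_left]
          exact congrArg _ (sum_congr rfl fun x hx => by rw [filter_le_of_mem x hx])
      _ = _ := by rw [ih, sum_insert ha_notMem]; abel

/-- Midpoint rule for `∫ (t - 1/2)²` over `[a - h, a]`, with its exact error `h³ / 12`. -/
theorem mul_sq_midpoint_sub_half {K : Type*} [Field K] [CharZero K] (a h : K) :
    h * (a - h / 2 - 1 / 2) ^ 2 = ((a - 1 / 2) ^ 3 - (a - h - 1 / 2) ^ 3) / 3 - h ^ 3 / 12 := by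
  ring

theorem mid_distribution_variance_general (S : Finset ℝ) (p : ℝ → ℝ)
    (hsum : ∑ x ∈ S, p x = 1)
    (F : ℝ → ℝ) (hF : ∀ x, F x = ∑ y ∈ S.filter (fun y => y ≤ x), p y)
    (Fmid : ℝ → ℝ) (hFmid : ∀ x, Fmid x = F x - p x / 2) :
    ∑ x ∈ S, p x * (Fmid x - 1 / 2) ^ 2 = (1 - ∑ x ∈ S, (p x) ^ 3) / 12 := by
  have telescope := S.sum_sub_comp_partialSum_telescope p fun t => (t - 1 / 2) ^ 3
  rw [hsum] at telescope
  simp_rw [← hF] at telescope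
  simp_rw [hFmid, mul_sq_midpoint_sub_half, sum_sub_distrib, ← sum_div, telescope]
  ring

/-- For a random variable taking values in a finite set `S ⊂ ℝ`
with probability mass function `p`, cumulative distribution function
`F x = ∑_{y ∈ S, y ≤ x} p y`, and mid-distribution transform
`Fmid x = F x - p x / 2`, the variance of the mid-distribution transform is
`Var(Fmid(X)) = ∑_{x ∈ S} p x * (Fmid x - 1/2)² = (1 - ∑_{x ∈ S} p x ³)/12`. -/
theorem mid_distribution_variance (S : Finset ℝ) (p : ℝ → ℝ)
    (hp : ∀ x ∈ S, 0 ≤ p x) (hsum : ∑ x ∈ S, p x = 1)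
    (F : ℝ → ℝ) (hF : ∀ x, F x = ∑ y ∈ S.filter (fun y => y ≤ x), p y)
    (Fmid : ℝ → ℝ) (hFmid : ∀ x, Fmid x = F x - p x / 2) :
    ∑ x ∈ S, p x * (Fmid x - 1 / 2) ^ 2 = (1 - ∑ x ∈ S, (p x) ^ 3) / 12 :=
  mid_distribution_variance_general S p hsum F hF Fmid hFmid
end

section
/- Let X be a random variable taking values in a finite set S ⊂ ℝ with probability mass function p, cumulative distribution function F, and mid-distribution transform F^mid(x) = F(x) − p(x)/2. Assume X is not almost surely constant, so that Σ_{x∈S} p(x)³ < 1. Define ζ(x) = √12 (F^mid(x) − 1/2)/√(1 − Σ_{x∈S} p(x)³). Then E[ζ(X)] = 0 and E[ζ(X)²] = 1. -/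
/-!
Both moments follow by telescoping over the points of `S` in increasing order: for any `g`,
`∑ₓ (g (F x) - g (F x - p x)) = g 1 - g 0`, since `F x - p x` is the value of `F` at the
previous point. With `g t = t²` the summand is `2 p(x) F^mid(x)`, and with `g t = t³` it is
`3 p(x) F^mid(x)² + p(x)³ / 4`; hence `E[F^mid(X)] = 1/2` and `Var F^mid(X) = (1 - ∑ p³) / 12`.
-/

open Finset

variable {α K : Type*} [LinearOrder α]

section

variable {M N : Type*} [AddCommGroup M] [AddCommGroup N]

def cdf (S : Finset α) (p : α → M) (x : α) : M :=
  ∑ y ∈ S.filter (· ≤ x), p y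

theorem sum_sub_cdf_telescope (S : Finset α) (p : α → M) (g : M → N) :
    ∑ x ∈ S, (g (cdf S p x) - g (cdf S p x - p x)) = g (∑ x ∈ S, p x) - g 0 := by
  induction S using Finset.induction_on_max with
  | empty => simp
  | insert a s hlt ih =>
    have ha : a ∉ s := fun h => lt_irrefl a (hlt a h)
    have hcdf_a : cdf (insert a s) p a = p a + ∑ x ∈ s, p x := by
      rw [cdf, filter_true_of_mem fun y hy => ?_, sum_insert ha]
      rcases mem_insert.1 hy with rfl | hy
      exacts [le_rfl, (hlt y hy).le]
    have hcdf_s : ∀ x ∈ s, cdf (insert a s) p x = cdf s p x := fun x hx => by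
      rw [cdf, cdf, filter_insert, if_neg (not_le.2 (hlt x hx))]
    rw [sum_insert ha, sum_congr rfl fun x hx => by rw [hcdf_s x hx], ih, hcdf_a,
      sum_insert ha, add_sub_cancel_left]
    abel

end

variable [Field K] [CharZero K]

def midCdf (S : Finset α) (p : α → K) (x : α) : K :=
  cdf S p x - p x / 2

theorem sum_mul_midCdf (S : Finset α) (p : α → K) :
    ∑ x ∈ S, p x * midCdf S p x = (∑ x ∈ S, p x) ^ 2 / 2 := by
  have h := sum_sub_cdf_telescope S p (· ^ 2)
  rw [zero_pow two_ne_zero, sub_zero] at h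
  rw [eq_div_iff two_ne_zero, ← h, sum_mul]
  refine sum_congr rfl fun x _ => ?_
  simp only [midCdf]
  ring

theorem sum_mul_midCdf_sq (S : Finset α) (p : α → K) :
    ∑ x ∈ S, p x * midCdf S p x ^ 2 = (4 * (∑ x ∈ S, p x) ^ 3 - ∑ x ∈ S, p x ^ 3) / 12 := by
  have h := sum_sub_cdf_telescope S p (· ^ 3)
  rw [zero_pow three_ne_zero, sub_zero] at h
  rw [eq_div_iff (by norm_num), ← h, mul_sum, ← sum_sub_distrib, sum_mul]
  refine sum_congr rfl fun x _ => ?_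
  simp only [midCdf]
  ring

theorem sum_mul_midCdf_sub_sq (S : Finset α) (p : α → K) :
    ∑ x ∈ S, p x * (midCdf S p x - (∑ y ∈ S, p y) / 2) ^ 2
      = ((∑ x ∈ S, p x) ^ 3 - ∑ x ∈ S, p x ^ 3) / 12 := by
  have hexpand : ∀ x ∈ S, p x * (midCdf S p x - (∑ y ∈ S, p y) / 2) ^ 2
      = p x * midCdf S p x ^ 2 - (∑ y ∈ S, p y) * (p x * midCdf S p x)
        + (∑ y ∈ S, p y) ^ 2 / 4 * p x := fun x _ => by ring
  rw [sum_congr rfl hexpand, sum_add_distrib, sum_sub_distrib, ← mul_sum, ← mul_sum,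
    sum_mul_midCdf, sum_mul_midCdf_sq]
  ring

theorem first_LP_basis_standardized_general (S : Finset ℝ) (p : ℝ → ℝ)
    (hsum : ∑ x ∈ S, p x = 1)
    (F : ℝ → ℝ) (hF : ∀ x, F x = ∑ y ∈ S.filter (fun y => y ≤ x), p y)
    (Fmid : ℝ → ℝ) (hFmid : ∀ x, Fmid x = F x - p x / 2)
    (hnc : ∑ x ∈ S, (p x) ^ 3 < 1)
    (ζ : ℝ → ℝ)
    (hζ : ∀ x, ζ x = Real.sqrt 12 * (Fmid x - 1 / 2) /
        Real.sqrt (1 - ∑ y ∈ S, (p y) ^ 3)) :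
    ∑ x ∈ S, p x * ζ x = 0 ∧ ∑ x ∈ S, p x * (ζ x) ^ 2 = 1 := by
  set c := Real.sqrt 12 / Real.sqrt (1 - ∑ y ∈ S, p y ^ 3)
  have hζ' : ∀ x, ζ x = c * (midCdf S p x - 1 / 2) := fun x => by
    rw [hζ, hFmid, hF, midCdf, cdf]
    ring
  have hc : c ^ 2 = 12 / (1 - ∑ y ∈ S, p y ^ 3) := by
    rw [div_pow, Real.sq_sqrt (by norm_num), Real.sq_sqrt (by linarith)]
  have hmean := sum_mul_midCdf S p
  have hvar := sum_mul_midCdf_sub_sq S p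
  rw [hsum] at hmean hvar
  constructor
  · simp_rw [hζ', mul_left_comm (p _), ← mul_sum, mul_sub, sum_sub_distrib, ← sum_mul, hmean,
      hsum]
    ring
  · simp_rw [hζ', mul_pow, mul_left_comm (p _), ← mul_sum, hvar, hc]
    field_simp [(sub_pos.2 hnc).ne']

/-- For a random variable taking values in a finite set `S ⊂ ℝ`
with probability mass function `p`, mid-distribution transform
`Fmid x = F x - p x / 2`, and first LP-basis function
`ζ(x) = √12 (Fmid x − 1/2)/√(1 − ∑_{x∈S} p x ³)`, assuming
`∑_{x∈S} p x ³ < 1` (i.e. not almost surely constant), we have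
`E[ζ(X)] = 0` and `E[ζ(X)²] = 1`. -/
theorem first_LP_basis_standardized (S : Finset ℝ) (p : ℝ → ℝ)
    (hp : ∀ x ∈ S, 0 ≤ p x) (hsum : ∑ x ∈ S, p x = 1)
    (F : ℝ → ℝ) (hF : ∀ x, F x = ∑ y ∈ S.filter (fun y => y ≤ x), p y)
    (Fmid : ℝ → ℝ) (hFmid : ∀ x, Fmid x = F x - p x / 2)
    (hnc : ∑ x ∈ S, (p x) ^ 3 < 1)
    (ζ : ℝ → ℝ)
    (hζ : ∀ x, ζ x = Real.sqrt 12 * (Fmid x - 1 / 2) /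
        Real.sqrt (1 - ∑ y ∈ S, (p y) ^ 3)) :
    ∑ x ∈ S, p x * ζ x = 0 ∧ ∑ x ∈ S, p x * (ζ x) ^ 2 = 1 :=
  first_LP_basis_standardized_general S p hsum F hF Fmid hFmid hnc ζ hζ
end

section
/- (LP-representation of the Wilcoxon statistic.) Let n₁, n₂ ≥ 1, n = n₁ + n₂, let y_i = 0 for i = 1,…,n₁ and y_i = 1 for i = n₁+1,…,n, and let x₁,…,x_n be distinct real numbers with ranks R_i = #{j : x_j ≤ x_i}. Define T₁(y_i; F̃_Y) = −√(n₂/n₁) for i ≤ n₁ and √(n₁/n₂) for i > n₁, and T₁(x_i; F̃_X) = √(12/(n²−1)) (R_i − (n+1)/2). Then the empirical LP-comean L̂P[1,1;Y,X] = n⁻¹ Σ_{i=1}^n T₁(y_i; F̃_Y) T₁(x_i; F̃_X) satisfies L̂P[1,1;Y,X] = √(12/((n²−1) n₁ n₂)) ( Σ_{i=n₁+1}^n R_i − n₂(n+1)/2 ), i.e., it equals the standardized Wilcoxon rank-sum statistic up to the factor √((n+1)/n). -/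
/-!
The ranks of distinct observations are a permutation of `1, …, n`, so the centered ranks
`Rᵢ - (n + 1)/2` sum to zero. The weights `-√(n₂/n₁)` on the first sample can therefore be
traded for `+√(n₂/n₁)` on the second, and the comean becomes
`n⁻¹ (√(n₁/n₂) + √(n₂/n₁)) = 1/√(n₁ n₂)` times the centered rank sum of the second sample.
-/

open Finset

theorem Fin.card_filter_le_val (n m : ℕ) : #{i : Fin n | m ≤ (i : ℕ)} = n - m := by
  have hsplit :=
    card_filter_add_card_filter_not (s := (univ : Finset (Fin n))) (fun i => (i : ℕ) < m)
  simp only [not_lt, Fin.card_filter_val_lt, card_univ, Fintype.card_fin] at hsplit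
  omega

theorem two_mul_sum_card_filter_le_of_injective {ι α : Type*} [Fintype ι] [DecidableEq ι]
    [LinearOrder α] {x : ι → α} (hx : Function.Injective x) :
    2 * ∑ i, #{j | x j ≤ x i} = Fintype.card ι * (Fintype.card ι + 1) := by
  -- a pair `i ≠ j` is counted once by the two sums together, the diagonal twice
  have hpair : ∀ i j, (if x j ≤ x i then 1 else 0) + (if x i ≤ x j then 1 else 0)
      = 1 + (if i = j then 1 else 0) := by
    intro i j
    rcases lt_trichotomy (x i) (x j) with h | h | h
    · simp [h.not_ge, h.le, hx.ne_iff.1 h.ne]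
    · simp [hx h]
    · simp [h.not_ge, h.le, hx.ne_iff.1 h.ne']
  calc 2 * ∑ i, #{j | x j ≤ x i}
      = ∑ i, ∑ j, ((if x j ≤ x i then 1 else 0) + (if x i ≤ x j then 1 else 0)) := by
        simp only [card_filter, sum_add_distrib, two_mul]
        rw [sum_comm (f := fun i j => if x i ≤ x j then 1 else 0)]
    _ = Fintype.card ι * (Fintype.card ι + 1) := by
        simp only [hpair, sum_add_distrib, sum_ite_eq, mem_univ, if_true, sum_const, card_univ,
          smul_eq_mul, mul_one]
        ring

-- Both sides vanish when `a = 0` or `b = 0`, by the conventions `x / 0 = 0` and `0⁻¹ = 0`.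
theorem inv_add_mul_sqrt_div_add_sqrt_div {a b : ℝ} (ha : 0 ≤ a) (hb : 0 ≤ b) :
    (a + b)⁻¹ * (√(a / b) + √(b / a)) = (√(a * b))⁻¹ := by
  rcases ha.eq_or_lt with rfl | ha
  · simp
  rcases hb.eq_or_lt with rfl | hb
  · simp
  have hsa := Real.sq_sqrt ha.le
  have hsb := Real.sq_sqrt hb.le
  have := Real.sqrt_pos.2 ha
  have := Real.sqrt_pos.2 hb
  rw [Real.sqrt_div ha.le, Real.sqrt_div hb.le, Real.sqrt_mul ha.le]
  field_simp
  rw [hsa, hsb]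

theorem sum_mul_eq_add_mul_sum_filter {ι R : Type*} [Fintype ι] [CommRing R] (p : ι → Prop)
    [DecidablePred p] {w f : ι → R} {a b : R} (hf : ∑ i, f i = 0) (hp : ∀ i, p i → w i = a)
    (hnp : ∀ i, ¬p i → w i = -b) :
    ∑ i, w i * f i = (a + b) * ∑ i with p i, f i := by
  have hnot : ∑ i with ¬p i, f i = -∑ i with p i, f i := by
    rw [eq_neg_iff_add_eq_zero, add_comm, sum_filter_add_sum_filter_not, hf]
  have hpos : ∑ i with p i, w i * f i = a * ∑ i with p i, f i := by
    rw [mul_sum]; exact sum_congr rfl fun i hi => by rw [hp i (mem_filter.1 hi).2]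
  have hneg : ∑ i with ¬p i, w i * f i = -b * ∑ i with ¬p i, f i := by
    rw [mul_sum]; exact sum_congr rfl fun i hi => by rw [hnp i (mem_filter.1 hi).2]
  rw [← sum_filter_add_sum_filter_not univ p, hpos, hneg, hnot]
  ring

theorem LP_comean_wilcoxon_general (n₁ n₂ : ℕ)
    (n : ℕ) (hn : n = n₁ + n₂)
    (x : Fin n → ℝ) (hx : Function.Injective x)
    (R : Fin n → ℕ)
    (hR : ∀ i, R i = (Finset.univ.filter (fun j => x j ≤ x i)).card)
    (TY TX : Fin n → ℝ)
    (hTY0 : ∀ i : Fin n, (i : ℕ) < n₁ → TY i = -Real.sqrt ((n₂ : ℝ) / n₁))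
    (hTY1 : ∀ i : Fin n, n₁ ≤ (i : ℕ) → TY i = Real.sqrt ((n₁ : ℝ) / n₂))
    (hTX : ∀ i, TX i = Real.sqrt (12 / ((n : ℝ) ^ 2 - 1)) * ((R i : ℝ) - ((n : ℝ) + 1) / 2))
    (LP : ℝ) (hLP : LP = (n : ℝ)⁻¹ * ∑ i, TY i * TX i) :
    LP = Real.sqrt (12 / (((n : ℝ) ^ 2 - 1) * n₁ * n₂)) *
      ((∑ i ∈ Finset.univ.filter (fun i : Fin n => n₁ ≤ (i : ℕ)), (R i : ℝ))
        - (n₂ : ℝ) * ((n : ℝ) + 1) / 2) := by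
  set m : ℝ := ((n : ℝ) + 1) / 2 with hm
  set c : ℝ := √(12 / ((n : ℝ) ^ 2 - 1))
  have hcentered : ∑ i, ((R i : ℝ) - m) = 0 := by
    have hrank := two_mul_sum_card_filter_le_of_injective hx
    simp only [Fintype.card_fin, ← hR] at hrank
    have hrank' : (2 : ℝ) * ∑ i, (R i : ℝ) = n * (n + 1) := by exact_mod_cast hrank
    rw [sum_sub_distrib, sum_const, card_univ, Fintype.card_fin, nsmul_eq_mul, hm]
    linarith
  have hcomean : ∑ i, TY i * TX i
      = c * ((√(n₁ / n₂) + √(n₂ / n₁)) * ∑ i with n₁ ≤ ((i : Fin n) : ℕ), ((R i : ℝ) - m)) := by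
    simp_rw [hTX, mul_left_comm _ c, ← mul_sum]
    rw [sum_mul_eq_add_mul_sum_filter _ hcentered hTY1 fun i hi => hTY0 i (not_le.1 hi)]
  have hshift : ∑ i with n₁ ≤ ((i : Fin n) : ℕ), ((R i : ℝ) - m)
      = ∑ i with n₁ ≤ ((i : Fin n) : ℕ), (R i : ℝ) - n₂ * m := by
    rw [sum_sub_distrib, sum_const, Fin.card_filter_le_val, nsmul_eq_mul,
      show n - n₁ = n₂ by omega]
  have hscale : (n : ℝ)⁻¹ * (c * (√(n₁ / n₂) + √(n₂ / n₁)))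
      = √(12 / (((n : ℝ) ^ 2 - 1) * n₁ * n₂)) := by
    have hsqrt := inv_add_mul_sqrt_div_add_sqrt_div (Nat.cast_nonneg' n₁) (Nat.cast_nonneg' n₂)
    rw [← Nat.cast_add, ← hn] at hsqrt
    rw [mul_left_comm, hsqrt, mul_assoc, div_mul_eq_div_div, Real.sqrt_div' _ (by positivity),
      div_eq_mul_inv]
  rw [hLP, hcomean, hshift, ← hscale]
  ring

/-- (LP-representation of the Wilcoxon statistic.)
For two-sample data with labels `y_i = 0` for `i ≤ n₁`, `y_i = 1` for `i > n₁`
(`n = n₁ + n₂`), distinct observations `x` with ranks `R i = #{j : x j ≤ x i}`,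
first LP-basis values `TY i = −√(n₂/n₁)` for `i ≤ n₁`, `TY i = √(n₁/n₂)` for
`i > n₁`, and `TX i = √(12/(n²−1)) (R i − (n+1)/2)`, the empirical LP-comean
`L̂P[1,1] = n⁻¹ ∑ᵢ TY i * TX i` equals
`√(12/((n²−1) n₁ n₂)) (∑_{i>n₁} R i − n₂(n+1)/2)`. -/
theorem LP_comean_wilcoxon (n₁ n₂ : ℕ) (h₁ : 1 ≤ n₁) (h₂ : 1 ≤ n₂)
    (n : ℕ) (hn : n = n₁ + n₂)
    (x : Fin n → ℝ) (hx : Function.Injective x)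
    (R : Fin n → ℕ)
    (hR : ∀ i, R i = (Finset.univ.filter (fun j => x j ≤ x i)).card)
    (TY TX : Fin n → ℝ)
    (hTY0 : ∀ i : Fin n, (i : ℕ) < n₁ → TY i = -Real.sqrt ((n₂ : ℝ) / n₁))
    (hTY1 : ∀ i : Fin n, n₁ ≤ (i : ℕ) → TY i = Real.sqrt ((n₁ : ℝ) / n₂))
    (hTX : ∀ i, TX i = Real.sqrt (12 / ((n : ℝ) ^ 2 - 1)) * ((R i : ℝ) - ((n : ℝ) + 1) / 2))
    (LP : ℝ) (hLP : LP = (n : ℝ)⁻¹ * ∑ i, TY i * TX i) :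
    LP = Real.sqrt (12 / (((n : ℝ) ^ 2 - 1) * n₁ * n₂)) *
      ((∑ i ∈ Finset.univ.filter (fun i : Fin n => n₁ ≤ (i : ℕ)), (R i : ℝ))
        - (n₂ : ℝ) * ((n : ℝ) + 1) / 2) :=
  LP_comean_wilcoxon_general n₁ n₂ n hn x hx R hR TY TX hTY0 hTY1 hTX LP hLP
end

section
/- (Theorem 4: Parseval identity for the checkerboard copula.) Let Y and Z be random variables taking values in {1,…,k} with joint probability mass function p(y,z) and strictly positive marginal probability mass functions p_Y and p_Z. Let {T_0, T_1, …, T_{k−1}} be functions on {1,…,k} forming an orthonormal basis of L²(p_Y) with T_0 ≡ 1 (i.e., Σ_y p_Y(y) T_j(y) T_{j'}(y) = δ_{jj'}), and let {S_0, S_1, …, S_{k−1}} be an orthonormal basis of L²(p_Z) with S_0 ≡ 1. Let cop(u,v) = p(Q(u;Y), Q(v;Z)) / (p_Y(Q(u;Y)) p_Z(Q(v;Z))) be the checkerboard copula density. Then ∬_{[0,1]²} (cop(u,v) − 1)² du dv = Σ_{j=1}^{k−1} Σ_{ℓ=1}^{k−1} ( LP[j,ℓ;Y,Z] )², where LP[j,ℓ;Y,Z]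 = E[T_j(Y) S_ℓ(Z)] = Σ_{y,z} p(y,z) T_j(y) S_ℓ(z). -/
/-!
The checkerboard copula is constant on the cells `(F_Y(y-1), F_Y(y)) × (F_Z(z-1), F_Z(z))`,
of area `p_Y(y) p_Z(z)`, so the left side is the `χ²`-divergence
`∑ p(y,z)² / (p_Y(y) p_Z(z)) - 1`. The LP-comeans are the coefficients of `p / (p_Y ⊗ p_Z)` in
the orthonormal basis `T_j ⊗ S_ℓ` of `L²(p_Y ⊗ p_Z)`, so by Parseval the sum of all their
squares is `∑ p² / (p_Y p_Z)`; as `T_0 = S_0 = 1`, the terms with `j = 0` or `ℓ = 0` contribute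
exactly `1`.
-/

open Finset MeasureTheory

section Orthonormal

variable {α ι : Type*} [DecidableEq α] [DecidableEq ι] {s : Finset α} {J : Finset ι}
  {w : α → ℝ} {T : ι → α → ℝ}

/-- Orthonormality says `A * B = 1` for `A j y = T j y` and `B y j = w y * T j y`; since the
matrices are square, also `B * A = 1`, which is the claim. -/
theorem sum_mul_eq_ite_inv_of_orthonormal (hcard : #J = #s) (hw : ∀ y ∈ s, w y ≠ 0)
    (horth : ∀ j ∈ J, ∀ j' ∈ J, ∑ y ∈ s, w y * T j y * T j' y = if j = j' then 1 else 0)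
    {y y' : α} (hy : y ∈ s) (hy' : y' ∈ s) :
    ∑ j ∈ J, T j y * T j y' = if y = y' then (w y)⁻¹ else 0 := by
  let A : Matrix J s ℝ := Matrix.of fun j y => T j y
  let B : Matrix s J ℝ := Matrix.of fun y j => w y * T j y
  have hAB : A * B = 1 := by
    ext j j'
    simp only [Matrix.mul_apply, Matrix.one_apply, Subtype.ext_iff]
    rw [← horth j j.2 j' j'.2, ← sum_coe_sort s]
    exact sum_congr rfl fun y _ => by simp only [A, B, Matrix.of_apply]; ring
  have hBA : B * A = 1 :=
    (Matrix.mul_eq_one_comm_of_equiv (Fintype.equivOfCardEq (by simpa using hcard))).mp hAB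
  have hentry := congr_fun₂ hBA ⟨y, hy⟩ ⟨y', hy'⟩
  simp only [Matrix.mul_apply, Matrix.one_apply, Subtype.mk.injEq, A, B, Matrix.of_apply,
    mul_assoc, ← mul_sum, sum_coe_sort J (fun j => T j y * T j y')] at hentry
  split_ifs at hentry ⊢
  · exact eq_inv_of_mul_eq_one_right hentry
  · exact (mul_eq_zero.mp hentry).resolve_left (hw y hy)

theorem sum_sq_sum_mul_eq_sum_sq_div_of_orthonormal (hcard : #J = #s) (hw : ∀ y ∈ s, w y ≠ 0)
    (horth : ∀ j ∈ J, ∀ j' ∈ J, ∑ y ∈ s, w y * T j y * T j' y = if j = j' then 1 else 0)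
    (b : α → ℝ) :
    ∑ j ∈ J, (∑ y ∈ s, b y * T j y) ^ 2 = ∑ y ∈ s, b y ^ 2 / w y := by
  calc ∑ j ∈ J, (∑ y ∈ s, b y * T j y) ^ 2
      = ∑ y ∈ s, ∑ y' ∈ s, b y * b y' * ∑ j ∈ J, T j y * T j y' := by
        simp_rw [sq, sum_mul_sum, mul_sum]
        rw [sum_comm]
        refine sum_congr rfl fun y _ => ?_
        rw [sum_comm]
        exact sum_congr rfl fun y' _ => sum_congr rfl fun j _ => by ring
    _ = ∑ y ∈ s, b y ^ 2 / w y := by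
        refine sum_congr rfl fun y hy => ?_
        rw [sum_congr rfl fun y' hy' => by
          rw [sum_mul_eq_ite_inv_of_orthonormal hcard hw horth hy hy', mul_ite, mul_zero],
          sum_ite_eq s y, if_pos hy, sq, div_eq_mul_inv]

theorem sum_sum_sq_eq_sum_sum_sq_div_of_orthonormal {β κ : Type*} [DecidableEq β]
    [DecidableEq κ] {t : Finset β} {L : Finset κ} {wZ : β → ℝ} {S : κ → β → ℝ}
    (hcardT : #J = #s) (hw : ∀ y ∈ s, w y ≠ 0)
    (hTorth : ∀ j ∈ J, ∀ j' ∈ J, ∑ y ∈ s, w y * T j y * T j' y = if j = j' then 1 else 0)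
    (hcardS : #L = #t) (hwZ : ∀ z ∈ t, wZ z ≠ 0)
    (hSorth : ∀ l ∈ L, ∀ l' ∈ L, ∑ z ∈ t, wZ z * S l z * S l' z = if l = l' then 1 else 0)
    (p : α → β → ℝ) :
    ∑ j ∈ J, ∑ l ∈ L, (∑ y ∈ s, ∑ z ∈ t, p y z * T j y * S l z) ^ 2 =
      ∑ y ∈ s, ∑ z ∈ t, p y z ^ 2 / (w y * wZ z) := by
  have hswap : ∀ j l, ∑ y ∈ s, ∑ z ∈ t, p y z * T j y * S l z =
      ∑ z ∈ t, (∑ y ∈ s, p y z * T j y) * S l z := fun j l => by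
    rw [sum_comm]; simp_rw [sum_mul]
  calc ∑ j ∈ J, ∑ l ∈ L, (∑ y ∈ s, ∑ z ∈ t, p y z * T j y * S l z) ^ 2
      = ∑ z ∈ t, (∑ j ∈ J, (∑ y ∈ s, p y z * T j y) ^ 2) / wZ z := by
        simp_rw [hswap, sum_sq_sum_mul_eq_sum_sq_div_of_orthonormal hcardS hwZ hSorth, sum_div]
        exact sum_comm
    _ = ∑ y ∈ s, ∑ z ∈ t, p y z ^ 2 / (w y * wZ z) := by
        simp_rw [sum_sq_sum_mul_eq_sum_sq_div_of_orthonormal hcardT hw hTorth, sum_div, div_div]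
        exact sum_comm

end Orthonormal

theorem sum_sum_mul_div_sub_one_sq {α β : Type*} {s : Finset α} {t : Finset β}
    (p : α → β → ℝ) (hsum : ∑ y ∈ s, ∑ z ∈ t, p y z = 1) {pY : α → ℝ} {pZ : β → ℝ}
    (hpY : ∀ y ∈ s, pY y = ∑ z ∈ t, p y z) (hpZ : ∀ z ∈ t, pZ z = ∑ y ∈ s, p y z)
    (hpY0 : ∀ y ∈ s, pY y ≠ 0) (hpZ0 : ∀ z ∈ t, pZ z ≠ 0) :
    ∑ y ∈ s, ∑ z ∈ t, pY y * pZ z * (p y z / (pY y * pZ z) - 1) ^ 2 =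
      ∑ y ∈ s, ∑ z ∈ t, p y z ^ 2 / (pY y * pZ z) - 1 := by
  have hY : ∑ y ∈ s, pY y = 1 := by rw [sum_congr rfl hpY, hsum]
  have hZ : ∑ z ∈ t, pZ z = 1 := by rw [sum_congr rfl hpZ, sum_comm, hsum]
  have hexpand : ∀ y ∈ s, ∀ z ∈ t, pY y * pZ z * (p y z / (pY y * pZ z) - 1) ^ 2 =
      p y z ^ 2 / (pY y * pZ z) - 2 * p y z + pY y * pZ z := fun y hy z hz => by
    field_simp [hpY0 y hy, hpZ0 z hz]
    ring
  rw [sum_congr rfl fun y hy => sum_congr rfl (hexpand y hy)]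
  simp only [sum_add_distrib, sum_sub_distrib, ← mul_sum, hsum, hZ, mul_one, hY]
  ring

theorem sum_sum_mul_mul_of_eq_one_left {α β : Type*} {s : Finset α} {t : Finset β}
    {p : α → β → ℝ} {pZ : β → ℝ} {T : α → ℝ} (hT : ∀ y ∈ s, T y = 1)
    (hpZ : ∀ z ∈ t, pZ z = ∑ y ∈ s, p y z) (S : β → ℝ) :
    ∑ y ∈ s, ∑ z ∈ t, p y z * T y * S z = ∑ z ∈ t, pZ z * S z := by
  rw [sum_comm]
  refine sum_congr rfl fun z hz => ?_
  rw [hpZ z hz, sum_mul]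
  exact sum_congr rfl fun y hy => by rw [hT y hy, mul_one]

theorem sum_sum_mul_mul_of_eq_one_right {α β : Type*} {s : Finset α} {t : Finset β}
    {p : α → β → ℝ} {pY : α → ℝ} {S : β → ℝ} (hS : ∀ z ∈ t, S z = 1)
    (hpY : ∀ y ∈ s, pY y = ∑ z ∈ t, p y z) (T : α → ℝ) :
    ∑ y ∈ s, ∑ z ∈ t, p y z * T y * S z = ∑ y ∈ s, pY y * T y := by
  refine sum_congr rfl fun y hy => ?_
  rw [hpY y hy, sum_mul]
  exact sum_congr rfl fun z hz => by rw [hS z hz, mul_one]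

theorem sum_range_sum_range_sq_eq_one_add {k : ℕ} (hk : k ≠ 0) {A : ℕ → ℕ → ℝ}
    (hA0l : ∀ l ∈ range k, A 0 l = if 0 = l then 1 else 0)
    (hAj0 : ∀ j ∈ range k, A j 0 = if j = 0 then 1 else 0) :
    ∑ j ∈ range k, ∑ l ∈ range k, A j l ^ 2 =
      1 + ∑ j ∈ Icc 1 (k - 1), ∑ l ∈ Icc 1 (k - 1), A j l ^ 2 := by
  have hrange : range k = insert 0 (Icc 1 (k - 1)) := by
    rw [Nat.range_eq_Icc_zero_sub_one k hk, ← insert_Icc_add_one_left_eq_Icc (Nat.zero_le _),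
      zero_add]
  have hmem : ∀ i ∈ Icc 1 (k - 1), i ∈ range k ∧ i ≠ 0 := fun i hi => by
    simp only [mem_Icc, mem_range] at hi ⊢; omega
  have hrow : ∑ l ∈ Icc 1 (k - 1), A 0 l ^ 2 = 0 := sum_eq_zero fun l hl => by
    rw [hA0l l (hmem l hl).1, if_neg (hmem l hl).2.symm, zero_pow two_ne_zero]
  have hcol : ∀ j ∈ Icc 1 (k - 1), ∑ l ∈ range k, A j l ^ 2 = ∑ l ∈ Icc 1 (k - 1), A j l ^ 2 :=
    fun j hj => by
      rw [hrange, sum_insert (by simp), hAj0 j (hmem j hj).1, if_neg (hmem j hj).2,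
        zero_pow two_ne_zero, zero_add]
  rw [hrange, sum_insert (by simp), ← hrange, sum_congr rfl hcol, hrange, sum_insert (by simp),
    hrow, hA0l 0 (mem_range.mpr (Nat.pos_of_ne_zero hk)), if_pos rfl]
  ring

section Quantile

variable {k : ℕ} {q F : ℕ → ℝ} {Q : ℝ → ℕ}

theorem cdf_mono (hq : ∀ t ∈ Icc 1 k, 0 ≤ q t) (hF : ∀ z, F z = ∑ t ∈ Icc 1 z, q t)
    {m n : ℕ} (hmn : m ≤ n) (hn : n ≤ k) : F m ≤ F n := by
  rw [hF, hF]
  exact sum_le_sum_of_subset_of_nonneg (Icc_subset_Icc_right hmn) fun t ht _ =>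
    hq t (Icc_subset_Icc_right hn ht)

theorem quantile_eq_of_mem_Ioo
    (hq : ∀ t ∈ Icc 1 k, 0 ≤ q t) (hF : ∀ z, F z = ∑ t ∈ Icc 1 z, q t) (hFk : F k = 1)
    (hQ : ∀ v ∈ Set.Ioo (0 : ℝ) 1, IsLeast {z : ℕ | z ∈ Icc 1 k ∧ v ≤ F z} (Q v))
    {i : ℕ} (hi : i < k) {v : ℝ} (hv : v ∈ Set.Ioo (F i) (F (i + 1))) : Q v = i + 1 := by
  have hv01 : v ∈ Set.Ioo (0 : ℝ) 1 := by
    have h0 : F 0 = 0 := by simp [hF]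
    refine ⟨?_, ?_⟩
    · linarith [hv.1, h0, cdf_mono hq hF (Nat.zero_le i) hi.le]
    · linarith [hv.2, hFk, cdf_mono hq hF hi le_rfl]
  obtain ⟨⟨-, hvQ⟩, hleast⟩ := hQ v hv01
  have hle : Q v ≤ i + 1 := hleast ⟨mem_Icc.mpr ⟨by omega, hi⟩, hv.2.le⟩
  have hgt : i < Q v := by
    by_contra! hQi
    linarith [hv.1, hvQ, cdf_mono hq hF hQi hi.le]
  omega

theorem intervalIntegral_comp_quantile_of_lt
    (hq : ∀ t ∈ Icc 1 k, 0 ≤ q t) (hF : ∀ z, F z = ∑ t ∈ Icc 1 z, q t) (hFk : F k = 1)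
    (hQ : ∀ v ∈ Set.Ioo (0 : ℝ) 1, IsLeast {z : ℕ | z ∈ Icc 1 k ∧ v ≤ F z} (Q v))
    {i : ℕ} (hi : i < k) (h : ℕ → ℝ) :
    IntervalIntegrable (fun v => h (Q v)) volume (F i) (F (i + 1)) ∧
      ∫ v in F i..F (i + 1), h (Q v) = q (i + 1) * h (i + 1) := by
  have hle : F i ≤ F (i + 1) := cdf_mono hq hF (Nat.le_succ i) hi
  have hconst : Set.EqOn (fun v => h (Q v)) (fun _ => h (i + 1)) (Set.uIoo (F i) (F (i + 1))) :=
    fun v hv => by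
      rw [Set.uIoo_of_le hle] at hv
      simp only [quantile_eq_of_mem_Ioo hq hF hFk hQ hi hv]
  refine ⟨(intervalIntegrable_congr_uIoo hconst).mpr intervalIntegrable_const, ?_⟩
  rw [intervalIntegral.integral_congr_uIoo hconst, intervalIntegral.integral_const, smul_eq_mul,
    hF, hF, sum_Icc_succ_top (Nat.le_add_left 1 i), add_sub_cancel_left]

theorem intervalIntegral_comp_quantile
    (hq : ∀ t ∈ Icc 1 k, 0 ≤ q t) (hF : ∀ z, F z = ∑ t ∈ Icc 1 z, q t) (hFk : F k = 1)
    (hQ : ∀ v ∈ Set.Ioo (0 : ℝ) 1, IsLeast {z : ℕ | z ∈ Icc 1 k ∧ v ≤ F z} (Q v))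
    (h : ℕ → ℝ) :
    ∫ v in (0 : ℝ)..1, h (Q v) = ∑ z ∈ Icc 1 k, q z * h z := by
  have hpiece := fun i (hi : i < k) => intervalIntegral_comp_quantile_of_lt hq hF hFk hQ hi h
  have h0 : F 0 = 0 := by simp [hF]
  rw [← h0, ← hFk, ← intervalIntegral.sum_integral_adjacent_intervals fun i hi => (hpiece i hi).1,
    sum_congr rfl fun i hi => (hpiece i (mem_range.mp hi)).2, ← Nat.Ico_zero_eq_range,
    sum_Ico_add' (fun z => q z * h z), zero_add, Ico_add_one_right_eq_Icc]

theorem intervalIntegral_intervalIntegral_comp_quantile {qY qZ FY FZ : ℕ → ℝ}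
    {QY QZ : ℝ → ℕ} (hqY : ∀ t ∈ Icc 1 k, 0 ≤ qY t) (hFY : ∀ y, FY y = ∑ t ∈ Icc 1 y, qY t)
    (hFYk : FY k = 1)
    (hQY : ∀ u ∈ Set.Ioo (0 : ℝ) 1, IsLeast {y : ℕ | y ∈ Icc 1 k ∧ u ≤ FY y} (QY u))
    (hqZ : ∀ t ∈ Icc 1 k, 0 ≤ qZ t) (hFZ : ∀ z, FZ z = ∑ t ∈ Icc 1 z, qZ t) (hFZk : FZ k = 1)
    (hQZ : ∀ v ∈ Set.Ioo (0 : ℝ) 1, IsLeast {z : ℕ | z ∈ Icc 1 k ∧ v ≤ FZ z} (QZ v))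
    (f : ℕ → ℕ → ℝ) :
    ∫ u in (0 : ℝ)..1, ∫ v in (0 : ℝ)..1, f (QY u) (QZ v) =
      ∑ y ∈ Icc 1 k, ∑ z ∈ Icc 1 k, qY y * qZ z * f y z := by
  simp_rw [intervalIntegral_comp_quantile hqZ hFZ hFZk hQZ (f _),
    intervalIntegral_comp_quantile hqY hFY hFYk hQY fun y => ∑ z ∈ Icc 1 k, qZ z * f y z,
    mul_sum, mul_assoc]

end Quantile

theorem checkerboard_copula_parseval_general (k : ℕ)
    (p : ℕ → ℕ → ℝ)
    (hsum : ∑ y ∈ Finset.Icc 1 k, ∑ z ∈ Finset.Icc 1 k, p y z = 1)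
    (pY pZ : ℕ → ℝ)
    (hpY : ∀ y, pY y = ∑ z ∈ Finset.Icc 1 k, p y z)
    (hpZ : ∀ z, pZ z = ∑ y ∈ Finset.Icc 1 k, p y z)
    (hpYpos : ∀ y ∈ Finset.Icc 1 k, 0 < pY y)
    (hpZpos : ∀ z ∈ Finset.Icc 1 k, 0 < pZ z)
    (T S : ℕ → ℕ → ℝ)
    (hT0 : ∀ y ∈ Finset.Icc 1 k, T 0 y = 1)
    (hS0 : ∀ z ∈ Finset.Icc 1 k, S 0 z = 1)
    (hTorth : ∀ j ∈ Finset.range k, ∀ j' ∈ Finset.range k,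
      ∑ y ∈ Finset.Icc 1 k, pY y * T j y * T j' y = if j = j' then 1 else 0)
    (hSorth : ∀ l ∈ Finset.range k, ∀ l' ∈ Finset.range k,
      ∑ z ∈ Finset.Icc 1 k, pZ z * S l z * S l' z = if l = l' then 1 else 0)
    (FY FZ : ℕ → ℝ)
    (hFY : ∀ y, FY y = ∑ t ∈ Finset.Icc 1 y, pY t)
    (hFZ : ∀ z, FZ z = ∑ t ∈ Finset.Icc 1 z, pZ t)
    (QY QZ : ℝ → ℕ)
    (hQY : ∀ u ∈ Set.Ioo (0 : ℝ) 1,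
      IsLeast {y : ℕ | y ∈ Finset.Icc 1 k ∧ u ≤ FY y} (QY u))
    (hQZ : ∀ v ∈ Set.Ioo (0 : ℝ) 1,
      IsLeast {z : ℕ | z ∈ Finset.Icc 1 k ∧ v ≤ FZ z} (QZ v))
    (cop : ℝ → ℝ → ℝ)
    (hcop : ∀ u v, cop u v = p (QY u) (QZ v) / (pY (QY u) * pZ (QZ v))) :
    ∫ u in (0 : ℝ)..1, ∫ v in (0 : ℝ)..1, (cop u v - 1) ^ 2 =
      ∑ j ∈ Finset.Icc 1 (k - 1), ∑ l ∈ Finset.Icc 1 (k - 1),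
        (∑ y ∈ Finset.Icc 1 k, ∑ z ∈ Finset.Icc 1 k, p y z * T j y * S l z) ^ 2 := by
  have hk : k ≠ 0 := by rintro rfl; simp at hsum
  have hFYk : FY k = 1 := by rw [hFY, sum_congr rfl fun y _ => hpY y, hsum]
  have hFZk : FZ k = 1 := by rw [hFZ, sum_congr rfl fun z _ => hpZ z, sum_comm, hsum]
  have hpY0 : ∀ y ∈ Icc 1 k, pY y ≠ 0 := fun y hy => (hpYpos y hy).ne'
  have hpZ0 : ∀ z ∈ Icc 1 k, pZ z ≠ 0 := fun z hz => (hpZpos z hz).ne'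
  have h0 : 0 ∈ range k := mem_range.mpr (Nat.pos_of_ne_zero hk)
  have hLP0l : ∀ l ∈ range k, ∑ y ∈ Icc 1 k, ∑ z ∈ Icc 1 k, p y z * T 0 y * S l z =
      if 0 = l then 1 else 0 := fun l hl => by
    rw [sum_sum_mul_mul_of_eq_one_left hT0 (fun z _ => hpZ z), ← hSorth 0 h0 l hl]
    exact sum_congr rfl fun z hz => by rw [hS0 z hz, mul_one]
  have hLPj0 : ∀ j ∈ range k, ∑ y ∈ Icc 1 k, ∑ z ∈ Icc 1 k, p y z * T j y * S 0 z =
      if j = 0 then 1 else 0 := fun j hj => by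
    rw [sum_sum_mul_mul_of_eq_one_right hS0 (fun y _ => hpY y), ← hTorth j hj 0 h0]
    exact sum_congr rfl fun y hy => by rw [hT0 y hy, mul_one, mul_comm]
  calc ∫ u in (0 : ℝ)..1, ∫ v in (0 : ℝ)..1, (cop u v - 1) ^ 2
      = ∑ y ∈ Icc 1 k, ∑ z ∈ Icc 1 k, pY y * pZ z * (p y z / (pY y * pZ z) - 1) ^ 2 := by
        simp_rw [hcop]
        exact intervalIntegral_intervalIntegral_comp_quantile (fun y hy => (hpYpos y hy).le) hFY
          hFYk hQY (fun z hz => (hpZpos z hz).le) hFZ hFZk hQZ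
          fun y z => (p y z / (pY y * pZ z) - 1) ^ 2
    _ = ∑ y ∈ Icc 1 k, ∑ z ∈ Icc 1 k, p y z ^ 2 / (pY y * pZ z) - 1 :=
        sum_sum_mul_div_sub_one_sq p hsum (fun y _ => hpY y) (fun z _ => hpZ z) hpY0 hpZ0
    _ = ∑ j ∈ range k, ∑ l ∈ range k,
          (∑ y ∈ Icc 1 k, ∑ z ∈ Icc 1 k, p y z * T j y * S l z) ^ 2 - 1 := by
        rw [sum_sum_sq_eq_sum_sum_sq_div_of_orthonormal (by simp) hpY0 hTorth (by simp) hpZ0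
          hSorth]
    _ = _ := by
        rw [sum_range_sum_range_sq_eq_one_add hk hLP0l hLPj0, add_sub_cancel_left]

/-- (Theorem 4: Parseval identity for the checkerboard
copula.) For `Y, Z` on `{1,…,k}` with joint pmf `p`, strictly positive
marginals `pY, pZ`, orthonormal bases `{T 0,…,T (k−1)}` of `L²(pY)` and
`{S 0,…,S (k−1)}` of `L²(pZ)` with `T 0 ≡ 1 ≡ S 0`, and checkerboard copula
density `cop u v = p (QY u) (QZ v)/(pY (QY u) pZ (QZ v))`:
`∬_{[0,1]²} (cop − 1)² = ∑_{j=1}^{k−1} ∑_{ℓ=1}^{k−1} (LP[j,ℓ])²`, where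
`LP[j,ℓ] = ∑_{y,z} p y z * T j y * S ℓ z`. -/
theorem checkerboard_copula_parseval (k : ℕ) (hk : 1 ≤ k)
    (p : ℕ → ℕ → ℝ)
    (hp : ∀ y ∈ Finset.Icc 1 k, ∀ z ∈ Finset.Icc 1 k, 0 ≤ p y z)
    (hsum : ∑ y ∈ Finset.Icc 1 k, ∑ z ∈ Finset.Icc 1 k, p y z = 1)
    (pY pZ : ℕ → ℝ)
    (hpY : ∀ y, pY y = ∑ z ∈ Finset.Icc 1 k, p y z)
    (hpZ : ∀ z, pZ z = ∑ y ∈ Finset.Icc 1 k, p y z)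
    (hpYpos : ∀ y ∈ Finset.Icc 1 k, 0 < pY y)
    (hpZpos : ∀ z ∈ Finset.Icc 1 k, 0 < pZ z)
    (T S : ℕ → ℕ → ℝ)
    (hT0 : ∀ y ∈ Finset.Icc 1 k, T 0 y = 1)
    (hS0 : ∀ z ∈ Finset.Icc 1 k, S 0 z = 1)
    (hTorth : ∀ j ∈ Finset.range k, ∀ j' ∈ Finset.range k,
      ∑ y ∈ Finset.Icc 1 k, pY y * T j y * T j' y = if j = j' then 1 else 0)
    (hSorth : ∀ l ∈ Finset.range k, ∀ l' ∈ Finset.range k,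
      ∑ z ∈ Finset.Icc 1 k, pZ z * S l z * S l' z = if l = l' then 1 else 0)
    (FY FZ : ℕ → ℝ)
    (hFY : ∀ y, FY y = ∑ t ∈ Finset.Icc 1 y, pY t)
    (hFZ : ∀ z, FZ z = ∑ t ∈ Finset.Icc 1 z, pZ t)
    (QY QZ : ℝ → ℕ)
    (hQY : ∀ u ∈ Set.Ioo (0 : ℝ) 1,
      IsLeast {y : ℕ | y ∈ Finset.Icc 1 k ∧ u ≤ FY y} (QY u))
    (hQZ : ∀ v ∈ Set.Ioo (0 : ℝ) 1,
      IsLeast {z : ℕ | z ∈ Finset.Icc 1 k ∧ v ≤ FZ z} (QZ v))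
    (cop : ℝ → ℝ → ℝ)
    (hcop : ∀ u v, cop u v = p (QY u) (QZ v) / (pY (QY u) * pZ (QZ v))) :
    ∫ u in (0 : ℝ)..1, ∫ v in (0 : ℝ)..1, (cop u v - 1) ^ 2 =
      ∑ j ∈ Finset.Icc 1 (k - 1), ∑ l ∈ Finset.Icc 1 (k - 1),
        (∑ y ∈ Finset.Icc 1 k, ∑ z ∈ Finset.Icc 1 k, p y z * T j y * S l z) ^ 2 :=
  checkerboard_copula_parseval_general k p hsum pY pZ hpY hpZ hpYpos hpZpos T S hT0 hS0 hTorth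
    hSorth FY FZ hFY hFZ QY QZ hQY hQZ cop hcop
end
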